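/- For fixed h ∈ ℝ and δ > 0, the function p̃₁(x) = φ(x) − (φ(h)/Φ(h)) e^{−2δh − 3δ²/2 + δx} Φ(x − δ) satisfies p̃₁(x) = ∫_{−∞}^{h} p_{h,δ}(x | y) · (φ(y)/Φ(h)) dy for all x < h, where p_{h,δ}(x | y) = φ(x)[1 − exp(−(h−x)(h−y) − δ(3h − 2x − y + 2δ))]. -/
import Mathlib


open MeasureTheory Set

/-- Standard normal density. -/
noncomputable def stdGaussPDF (x : ℝ) : ℝ :=
  (Real.sqrt (2 * Real.pi))⁻¹ * Real.exp (-x ^ 2 / 2)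

/-- Standard normal c.d.f. `Φ`. -/
noncomputable def stdGaussCDF (t : ℝ) : ℝ := ∫ x in Set.Iic t, stdGaussPDF x

/-- The discrete-time corrected kernel `p_{h,δ}`. -/
noncomputable def kernel_phδ (h δ x x₀ : ℝ) : ℝ :=
  stdGaussPDF x * (1 - Real.exp (-(h - x) * (h - x₀) - δ * (3 * h - 2 * x - x₀ + 2 * δ)))

lemma stdGaussPDF_pos (x : ℝ) : 0 < stdGaussPDF x := by
  unfold stdGaussPDF
  have h2π : 0 < 2 * Real.pi := by positivity
  positivity

lemma integrable_stdGaussPDF : Integrable stdGaussPDF := by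
  have h1 : Integrable (fun x : ℝ => Real.exp (-(1/2 : ℝ) * x ^ 2)) :=
    integrable_exp_neg_mul_sq (by norm_num)
  have h2 := h1.const_mul (Real.sqrt (2 * Real.pi))⁻¹
  have : stdGaussPDF = fun x : ℝ =>
      (Real.sqrt (2 * Real.pi))⁻¹ * Real.exp (-(1/2 : ℝ) * x ^ 2) := by
    funext x; unfold stdGaussPDF; ring_nf
  rw [this]; exact h2

lemma stdGaussCDF_pos (t : ℝ) : 0 < stdGaussCDF t := by
  unfold stdGaussCDF
  rw [setIntegral_pos_iff_support_of_nonneg_ae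
      (Filter.Eventually.of_forall fun x => (stdGaussPDF_pos x).le)
      integrable_stdGaussPDF.integrableOn]
  have hs : Function.support stdGaussPDF = Set.univ := by
    ext x; simp [(stdGaussPDF_pos x).ne']
  rw [hs, Set.univ_inter, Real.volume_Iic]
  simp

lemma exp_key (h δ x y : ℝ) :
    stdGaussPDF x * Real.exp (-(h - x) * (h - y) - δ * (3 * h - 2 * x - y + 2 * δ))
        * stdGaussPDF y
      = stdGaussPDF h * Real.exp (-2 * δ * h - 3 * δ ^ 2 / 2 + δ * x)
          * stdGaussPDF (y - (h - x + δ)) := by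
  unfold stdGaussPDF
  have e : Real.exp (-x ^ 2 / 2)
        * Real.exp (-(h - x) * (h - y) - δ * (3 * h - 2 * x - y + 2 * δ))
        * Real.exp (-y ^ 2 / 2)
      = Real.exp (-h ^ 2 / 2) * Real.exp (-2 * δ * h - 3 * δ ^ 2 / 2 + δ * x)
        * Real.exp (-(y - (h - x + δ)) ^ 2 / 2) := by
    rw [← Real.exp_add, ← Real.exp_add, ← Real.exp_add, ← Real.exp_add]
    congr 1; ring
  linear_combination ((Real.sqrt (2 * Real.pi))⁻¹) ^ 2 * e

lemma shift_integral (a t : ℝ) :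
    ∫ y in Set.Iic t, stdGaussPDF (y - a) = stdGaussCDF (t - a) := by
  unfold stdGaussCDF
  rw [← integral_indicator measurableSet_Iic, ← integral_indicator measurableSet_Iic,
    ← integral_sub_right_eq_self (Set.indicator (Set.Iic (t - a)) stdGaussPDF) a]
  congr 1; funext y
  by_cases hy : y ≤ t <;>
    simp [Set.indicator, hy, sub_le_sub_iff_right]

/-- One step of the iteration:
`p̃₁(x) = ∫_{−∞}^h p_{h,δ}(x|y) (φ(y)/Φ(h)) dy
       = φ(x) − (φ(h)/Φ(h)) e^{−2δh − 3δ²/2 + δx} Φ(x−δ)` for `x < h`. -/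
theorem tilde_p_one_formula (h δ : ℝ) (hδ : 0 < δ) (x : ℝ) (hx : x < h) :
    ∫ y in Set.Iic h, kernel_phδ h δ x y * (stdGaussPDF y / stdGaussCDF h)
      = stdGaussPDF x
        - stdGaussPDF h / stdGaussCDF h *
            Real.exp (-2 * δ * h - 3 * δ ^ 2 / 2 + δ * x) * stdGaussCDF (x - δ) := by
  have hΦ : 0 < stdGaussCDF h := stdGaussCDF_pos h
  set K : ℝ := -2 * δ * h - 3 * δ ^ 2 / 2 + δ * x with hK
  set a : ℝ := h - x + δ with ha
  have hptw : ∀ y : ℝ, kernel_phδ h δ x y * (stdGaussPDF y / stdGaussCDF h)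
      = (stdGaussPDF x * stdGaussPDF y
          - stdGaussPDF h * Real.exp K * stdGaussPDF (y - a)) / stdGaussCDF h := by
    intro y
    have e := exp_key h δ x y
    rw [← hK, ← ha] at e
    rw [kernel_phδ, ← e]
    field_simp
  calc ∫ y in Set.Iic h, kernel_phδ h δ x y * (stdGaussPDF y / stdGaussCDF h)
      = ∫ y in Set.Iic h, (stdGaussPDF x * stdGaussPDF y
          - stdGaussPDF h * Real.exp K * stdGaussPDF (y - a)) / stdGaussCDF h := by
        exact setIntegral_congr_fun measurableSet_Iic fun y _ => hptw y
    _ = ((∫ y in Set.Iic h, stdGaussPDF x * stdGaussPDF y)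
          - ∫ y in Set.Iic h, stdGaussPDF h * Real.exp K * stdGaussPDF (y - a))
          / stdGaussCDF h := by
        rw [integral_div, integral_sub]
        · exact (integrable_stdGaussPDF.integrableOn).const_mul _
        · exact ((integrable_stdGaussPDF.comp_sub_right a).integrableOn).const_mul _
    _ = (stdGaussPDF x * stdGaussCDF h
          - stdGaussPDF h * Real.exp K * stdGaussCDF (x - δ)) / stdGaussCDF h := by
        rw [integral_const_mul, integral_const_mul, shift_integral a h]
        have : h - a = x - δ := by rw [ha]; ring
        rw [this]; rfl
    _ = stdGaussPDF x - stdGaussPDF h / stdGaussCDF h * Real.exp K * stdGaussCDF (x - δ) := by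
        field_simp
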